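/- Let b > 0 and b ≤ c ≤ b+1. The constant Φ(b,c) := (1/(4(2b+1)²))·( 4(b+1)⁴·log(b+1) − 4b⁴·log b − (2b+1)·( 3 + 6b + 6b² − 4c² + 4(2b²+2b+1)·log c ) ) is sharp: there exists an H¹ function v on [b,b+1] with ∫_b^{b+1} v(r)·r dr = 0, v(c) ≠ 0, and v(c)² = Φ(b,c) · ∫_b^{b+1} v'(r)² · r dr. -/

import Mathlib

open MeasureTheory Set

/-- The sharp constant `Φ(b,c)` in the weighted Poincaré inequality on `[b, b+1]`. -/
noncomputable def Phi (b c : ℝ) : ℝ :=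
  (1 / (4 * (2 * b + 1) ^ 2)) *
    (4 * (b + 1) ^ 4 * Real.log (b + 1) - 4 * b ^ 4 * Real.log b
      - (2 * b + 1) * (3 + 6 * b + 6 * b ^ 2 - 4 * c ^ 2
          + 4 * (2 * b ^ 2 + 2 * b + 1) * Real.log c))

/-!
Put `k(r) = (r² - (b+1)²)/(2b+1) + [r ≤ c]`. The first summand vanishes at `b + 1`, equals `-1`
at `b` and has derivative `2r/(2b+1)`, so integrating by parts against it and applying the
fundamental theorem of calculus on `[b, c]` shows that every `v` with `∫ v(r) r dr = 0` satisfies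
`v(c) = ∫ v'(r) k(r) dr`. The extremal function is the mean-zero `v` with `v' = k/r`, for which
this reads `v(c) = ∫ v'(r)² r dr` (equality in Cauchy–Schwarz), and integrating the two
rational-logarithmic pieces of `(k/r)² r` explicitly gives `Φ(b,c)`.
-/

theorem integral_sub_weightedMean_mul_eq_zero {f w : ℝ → ℝ} {a d : ℝ}
    (hfw : IntervalIntegrable (fun r => f r * w r) volume a d)
    (hw : IntervalIntegrable w volume a d) (hw0 : ∫ r in a..d, w r ≠ 0) :
    ∫ r in a..d, (f r - (∫ s in a..d, f s * w s) / ∫ s in a..d, w s) * w r = 0 := by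
  simp only [sub_mul]
  rw [intervalIntegral.integral_sub hfw (hw.const_mul _), intervalIntegral.integral_const_mul,
    div_mul_cancel₀ _ hw0, sub_self]

theorem integrableOn_Icc_of_continuousOn_pieces {f f₁ f₂ : ℝ → ℝ} {a c d : ℝ}
    (h₁ : ContinuousOn f₁ (Icc a c)) (h₂ : ContinuousOn f₂ (Icc c d))
    (e₁ : EqOn f f₁ (Icc a c)) (e₂ : EqOn f f₂ (Ioc c d)) :
    IntegrableOn f (Icc a d) := by
  have i₁ : IntegrableOn f (Icc a c) :=
    h₁.integrableOn_Icc.congr_fun e₁.symm measurableSet_Icc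
  have i₂ : IntegrableOn f (Ioc c d) :=
    (h₂.integrableOn_Icc.mono_set Ioc_subset_Icc_self).congr_fun e₂.symm measurableSet_Ioc
  refine (i₁.union i₂).mono_set fun x hx => ?_
  rcases le_or_gt x c with h | h
  · exact Or.inl ⟨hx.1, h⟩
  · exact Or.inr ⟨h, hx.2⟩

theorem hasDerivAt_sq_div_sub_log_div {a B x : ℝ} (hB : B ≠ 0) (hx : x ≠ 0) :
    HasDerivAt (fun y => y ^ 2 / (2 * B) - a * Real.log y / B) ((x ^ 2 - a) / (B * x)) x := by
  refine (((hasDerivAt_pow 2 x).div_const (2 * B)).sub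
    (((Real.hasDerivAt_log hx).const_mul a).div_const B)).congr_deriv ?_
  field_simp
  ring

theorem integral_sq_sub_div_mul_sq_mul {a B x₁ x₂ : ℝ} (hB : B ≠ 0) (hx₁ : 0 < x₁)
    (hx : x₁ ≤ x₂) :
    ∫ r in x₁..x₂, ((r ^ 2 - a) / (B * r)) ^ 2 * r =
      (x₂ ^ 4 / 4 - a * x₂ ^ 2 + a ^ 2 * Real.log x₂) / B ^ 2
        - (x₁ ^ 4 / 4 - a * x₁ ^ 2 + a ^ 2 * Real.log x₁) / B ^ 2 := by
  have hpos : ∀ r ∈ uIcc x₁ x₂, r ≠ 0 := fun r hr =>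
    (hx₁.trans_le (uIcc_of_le hx ▸ hr).1).ne'
  refine intervalIntegral.integral_eq_sub_of_hasDerivAt
    (f := fun x => (x ^ 4 / 4 - a * x ^ 2 + a ^ 2 * Real.log x) / B ^ 2) (fun r hr => ?_)
    (ContinuousOn.intervalIntegrable ?_)
  · have := ((((hasDerivAt_pow 4 r).div_const 4).sub ((hasDerivAt_pow 2 r).const_mul a)).add
      ((Real.hasDerivAt_log (hpos r hr)).const_mul (a ^ 2))).div_const (B ^ 2)
    refine this.congr_deriv ?_
    field_simp [hpos r hr]
    ring
  · refine ContinuousOn.mul (ContinuousOn.pow ?_ 2) continuousOn_id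
    exact ContinuousOn.div (by fun_prop) (by fun_prop) fun r hr => mul_ne_zero hB (hpos r hr)

namespace PoincareSharp

noncomputable def kernel (b c r : ℝ) : ℝ :=
  (r ^ 2 - (b + 1) ^ 2) / (2 * b + 1) + if r ≤ c then 1 else 0

theorem integral_mul_quadratic_eq_of_integral_mul_self_eq_zero {b : ℝ} (hB : 2 * b + 1 ≠ 0)
    {v u : ℝ → ℝ} {s : Set ℝ} (hs : s.Countable) (hv : ContinuousOn v (Icc b (b + 1)))
    (hderiv : ∀ x ∈ Ioo b (b + 1) \ s, HasDerivAt v (u x) x)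
    (hu : IntervalIntegrable u volume b (b + 1)) (hmean : ∫ r in b..b + 1, v r * r = 0) :
    ∫ r in b..b + 1, u r * ((r ^ 2 - (b + 1) ^ 2) / (2 * b + 1)) = v b := by
  have hb : b ≤ b + 1 := by linarith
  have hQ : ∀ x, HasDerivAt (fun r => (r ^ 2 - (b + 1) ^ 2) / (2 * b + 1))
      (2 * x / (2 * b + 1)) x := fun x => by
    simpa using ((hasDerivAt_pow 2 x).sub_const ((b + 1) ^ 2)).div_const (2 * b + 1)
  have huQ : IntervalIntegrable (fun r => u r * ((r ^ 2 - (b + 1) ^ 2) / (2 * b + 1)))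
      volume b (b + 1) := hu.mul_continuousOn (by fun_prop)
  have hvQ' : IntervalIntegrable (fun r => v r * (2 * r / (2 * b + 1))) volume b (b + 1) :=
    ContinuousOn.intervalIntegrable (by rw [uIcc_of_le hb]; fun_prop)
  have hvQ'_eq : ∫ r in b..b + 1, v r * (2 * r / (2 * b + 1)) = 0 := by
    have : (fun r => v r * (2 * r / (2 * b + 1))) = fun r => 2 / (2 * b + 1) * (v r * r) := by
      ext r
      ring
    rw [this, intervalIntegral.integral_const_mul, hmean, mul_zero]
  have hparts := integral_eq_of_hasDerivAt_off_countable_of_le _ _ hb hs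
    (hv.mul (by fun_prop : ContinuousOn (fun r => (r ^ 2 - (b + 1) ^ 2) / (2 * b + 1)) _))
    (fun x hx => (hderiv x hx).mul (hQ x)) (huQ.add hvQ')
  rw [intervalIntegral.integral_add huQ hvQ', hvQ'_eq, add_zero] at hparts
  have hQb : (b ^ 2 - (b + 1) ^ 2) / (2 * b + 1) = -1 := by
    rw [div_eq_iff hB]
    ring
  rw [hparts]
  simp only [Pi.mul_apply, sub_self, zero_div, mul_zero, hQb]
  ring

theorem eq_integral_mul_kernel {b c : ℝ} (hB : 2 * b + 1 ≠ 0) (hc : c ∈ Icc b (b + 1))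
    {v u : ℝ → ℝ} {s : Set ℝ} (hs : s.Countable) (hv : ContinuousOn v (Icc b (b + 1)))
    (hderiv : ∀ x ∈ Ioo b (b + 1) \ s, HasDerivAt v (u x) x)
    (hu : IntervalIntegrable u volume b (b + 1)) (hmean : ∫ r in b..b + 1, v r * r = 0) :
    v c = ∫ r in b..b + 1, u r * kernel b c r := by
  have hftc : ∫ r in b..c, u r = v c - v b :=
    integral_eq_of_hasDerivAt_off_countable_of_le v u hc.1 hs
      (hv.mono (Icc_subset_Icc_right hc.2))
      (fun x hx => hderiv x ⟨⟨hx.1.1, hx.1.2.trans_le hc.2⟩, hx.2⟩)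
      (hu.mono_set (uIcc_subset_uIcc_left (Icc_subset_uIcc hc)))
  have hsplit : (fun r => u r * kernel b c r) =
      fun r => u r * ((r ^ 2 - (b + 1) ^ 2) / (2 * b + 1)) + {x | x ≤ c}.indicator u r := by
    ext r
    simp only [kernel, indicator, mem_ofPred_eq]
    split_ifs <;> ring
  have hind : IntervalIntegrable ({x | x ≤ c}.indicator u) volume b (b + 1) := by
    rw [intervalIntegrable_iff] at hu ⊢
    exact hu.indicator measurableSet_Iic
  rw [hsplit, intervalIntegral.integral_add (hu.mul_continuousOn (by fun_prop)) hind,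
    intervalIntegral.integral_indicator hc, hftc,
    integral_mul_quadratic_eq_of_integral_mul_self_eq_zero hB hs hv hderiv hu hmean]
  ring

noncomputable def extremalDeriv (b c r : ℝ) : ℝ := kernel b c r / r

noncomputable def extremalPrimitive (b c x : ℝ) : ℝ :=
  x ^ 2 / (2 * (2 * b + 1)) - b ^ 2 * Real.log x / (2 * b + 1) + min 0 (Real.log c - Real.log x)

noncomputable def extremal (b c x : ℝ) : ℝ :=
  extremalPrimitive b c x - (∫ r in b..b + 1, extremalPrimitive b c r * r) / ∫ r in b..b + 1, r

variable {b c : ℝ}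

theorem extremalDeriv_mul_kernel (r : ℝ) :
    extremalDeriv b c r * kernel b c r = extremalDeriv b c r ^ 2 * r := by
  unfold extremalDeriv
  rcases eq_or_ne r 0 with rfl | hr
  · simp
  · field_simp

theorem extremalDeriv_of_le (hB : 2 * b + 1 ≠ 0) {r : ℝ} (h : r ≤ c) :
    extremalDeriv b c r = (r ^ 2 - b ^ 2) / ((2 * b + 1) * r) := by
  rw [extremalDeriv, kernel, if_pos h, ← div_div, div_add_one hB]
  ring

theorem extremalDeriv_of_lt {r : ℝ} (h : c < r) :
    extremalDeriv b c r = (r ^ 2 - (b + 1) ^ 2) / ((2 * b + 1) * r) := by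
  rw [extremalDeriv, kernel, if_neg h.not_ge, add_zero, div_div]

theorem extremalDeriv_ne_zero (hb : 0 < b) {x : ℝ} (hx : x ∈ Ioo b (b + 1)) :
    extremalDeriv b c x ≠ 0 := by
  have hx0 : 0 < x := hb.trans hx.1
  rcases le_or_gt x c with h | h
  · rw [extremalDeriv_of_le (by positivity) h]
    have : 0 < x ^ 2 - b ^ 2 := by nlinarith [hx.1]
    positivity
  · rw [extremalDeriv_of_lt h]
    have : x ^ 2 - (b + 1) ^ 2 < 0 := by nlinarith [hx.2]
    exact (div_neg_of_neg_of_pos this (by positivity)).ne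

theorem intervalIntegrable_comp_extremalDeriv (hb : 0 < b) (hc : b ≤ c) {φ : ℝ → ℝ → ℝ}
    (hφ : Continuous (Function.uncurry φ)) :
    IntervalIntegrable (fun r => φ (extremalDeriv b c r) r) volume b (b + 1) := by
  rw [intervalIntegrable_iff_integrableOn_Icc_of_le (by linarith)]
  have hB : 2 * b + 1 ≠ 0 := by positivity
  have hne : ∀ r, b ≤ r → (2 * b + 1) * r ≠ 0 := fun r hr =>
    mul_ne_zero hB (hb.trans_le hr).ne'
  refine integrableOn_Icc_of_continuousOn_pieces (c := c)
    (f₁ := fun r => φ ((r ^ 2 - b ^ 2) / ((2 * b + 1) * r)) r)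
    (f₂ := fun r => φ ((r ^ 2 - (b + 1) ^ 2) / ((2 * b + 1) * r)) r) ?_ ?_
    (fun r hr => by simp only [extremalDeriv_of_le hB hr.2])
    (fun r hr => by simp only [extremalDeriv_of_lt hr.1])
  · exact hφ.comp_continuousOn (ContinuousOn.prodMk
      (ContinuousOn.div (by fun_prop) (by fun_prop) fun r hr => hne r hr.1)
      continuousOn_id)
  · exact hφ.comp_continuousOn (ContinuousOn.prodMk
      (ContinuousOn.div (by fun_prop) (by fun_prop) fun r hr => hne r (hc.trans hr.1))
      continuousOn_id)

theorem continuousOn_extremalPrimitive : ContinuousOn (extremalPrimitive b c) {0}ᶜ := by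
  have hlog := Real.continuousOn_log
  unfold extremalPrimitive
  fun_prop

theorem continuousOn_extremal (hb : 0 < b) : ContinuousOn (extremal b c) (Icc b (b + 1)) :=
  (continuousOn_extremalPrimitive.mono fun _ hx => (hb.trans_le hx.1).ne').sub continuousOn_const

theorem hasDerivAt_extremalPrimitive (hB : 2 * b + 1 ≠ 0) (hc : 0 < c) {x : ℝ} (hx : 0 < x)
    (hxc : x ≠ c) : HasDerivAt (extremalPrimitive b c) (extremalDeriv b c x) x := by
  have hsmooth := hasDerivAt_sq_div_sub_log_div (a := b ^ 2) hB hx.ne'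
  rcases hxc.lt_or_gt with h | h
  · rw [extremalDeriv_of_le hB h.le]
    refine hsmooth.congr_of_eventuallyEq ?_
    filter_upwards [Ioo_mem_nhds hx h] with y hy
    rw [extremalPrimitive, min_eq_left (sub_nonneg.2 (Real.log_le_log hy.1 hy.2.le)), add_zero]
  · rw [extremalDeriv_of_lt h]
    refine ((hsmooth.add ((Real.hasDerivAt_log hx.ne').const_sub (Real.log c))).congr_deriv
      ?_).congr_of_eventuallyEq ?_
    · field_simp
      linear_combination mul_inv_cancel₀ hB
    · filter_upwards [Ioi_mem_nhds h] with y hy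
      rw [extremalPrimitive, min_eq_right (sub_nonpos.2 (Real.log_le_log hc hy.le))]
      rfl

theorem integral_extremal_mul_self (hb : 0 < b) : ∫ r in b..b + 1, extremal b c r * r = 0 := by
  refine integral_sub_weightedMean_mul_eq_zero (w := fun r => r) ?_
    intervalIntegral.intervalIntegrable_id ?_
  · refine ContinuousOn.intervalIntegrable ?_
    rw [uIcc_of_le (by linarith)]
    exact (continuousOn_extremalPrimitive.mono fun _ hx => (hb.trans_le hx.1).ne').mul
      continuousOn_id
  · rw [integral_id]
    nlinarith

theorem integral_extremalDeriv_sq_mul (hb : 0 < b) (hc : c ∈ Icc b (b + 1)) :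
    ∫ r in b..b + 1, extremalDeriv b c r ^ 2 * r = Phi b c := by
  have hB : 2 * b + 1 ≠ 0 := by positivity
  have hint : IntervalIntegrable (fun r => extremalDeriv b c r ^ 2 * r) volume b (b + 1) :=
    intervalIntegrable_comp_extremalDeriv hb hc.1 (φ := fun y r => y ^ 2 * r) (by fun_prop)
  have hleft : ∫ r in b..c, extremalDeriv b c r ^ 2 * r =
      ∫ r in b..c, ((r ^ 2 - b ^ 2) / ((2 * b + 1) * r)) ^ 2 * r :=
    intervalIntegral.integral_congr fun r hr => by
      rw [extremalDeriv_of_le hB (uIcc_of_le hc.1 ▸ hr).2]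
  have hright : ∫ r in c..b + 1, extremalDeriv b c r ^ 2 * r =
      ∫ r in c..b + 1, ((r ^ 2 - (b + 1) ^ 2) / ((2 * b + 1) * r)) ^ 2 * r :=
    intervalIntegral.integral_congr_ae (Filter.Eventually.of_forall fun r hr => by
      rw [extremalDeriv_of_lt (uIoc_of_le hc.2 ▸ hr).1])
  rw [← intervalIntegral.integral_add_adjacent_intervals
      (hint.mono_set (uIcc_subset_uIcc_left (Icc_subset_uIcc hc)))
      (hint.mono_set (uIcc_subset_uIcc_right (Icc_subset_uIcc hc))),
    hleft, hright, integral_sq_sub_div_mul_sq_mul hB hb hc.1,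
    integral_sq_sub_div_mul_sq_mul hB (hb.trans_le hc.1) hc.2, Phi]
  field_simp
  ring

theorem integral_extremalDeriv_sq_mul_pos (hb : 0 < b) (hc : b ≤ c) :
    0 < ∫ r in b..b + 1, extremalDeriv b c r ^ 2 * r :=
  intervalIntegral.intervalIntegral_pos_of_pos_on
    (intervalIntegrable_comp_extremalDeriv hb hc (φ := fun y r => y ^ 2 * r) (by fun_prop))
    (fun x hx => mul_pos (sq_pos_of_ne_zero (extremalDeriv_ne_zero hb hx)) (hb.trans hx.1))
    (by linarith)

theorem hasDerivAt_extremal (hb : 0 < b) (hc : c ∈ Icc b (b + 1)) :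
    ∀ x ∈ Ioo b (b + 1) \ {c}, HasDerivAt (extremal b c) (extremalDeriv b c x) x := fun x hx =>
  (hasDerivAt_extremalPrimitive (by positivity) (hb.trans_le hc.1) (hb.trans hx.1.1)
    hx.2).sub_const _

theorem extremal_eq_add_integral (hb : 0 < b) (hc : c ∈ Icc b (b + 1)) {x : ℝ}
    (hx : x ∈ Icc b (b + 1)) :
    extremal b c x = extremal b c b + ∫ t in b..x, extremalDeriv b c t := by
  rw [integral_eq_of_hasDerivAt_off_countable_of_le _ _ hx.1 (countable_singleton c)
    ((continuousOn_extremal hb).mono (Icc_subset_Icc_right hx.2))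
    (fun y hy => hasDerivAt_extremal hb hc y
      ⟨⟨hy.1.1, hy.1.2.trans_le hx.2⟩, hy.2⟩)
    ((intervalIntegrable_comp_extremalDeriv hb hc.1 (φ := fun y _ => y) (by fun_prop)).mono_set
      (uIcc_subset_uIcc_left (Icc_subset_uIcc hx)))]
  ring

theorem extremal_eq_integral_extremalDeriv_sq_mul (hb : 0 < b) (hc : c ∈ Icc b (b + 1)) :
    extremal b c c = ∫ r in b..b + 1, extremalDeriv b c r ^ 2 * r := by
  simp only [eq_integral_mul_kernel (by positivity) hc (countable_singleton c)
    (continuousOn_extremal hb) (hasDerivAt_extremal hb hc)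
    (intervalIntegrable_comp_extremalDeriv hb hc.1 (φ := fun y _ => y) (by fun_prop))
    (integral_extremal_mul_self hb), extremalDeriv_mul_kernel]

end PoincareSharp

open PoincareSharp

theorem pointwise_poincare_sharp (b c : ℝ) (hb : 0 < b) (hc : c ∈ Set.Icc b (b + 1)) :
    ∃ v g : ℝ → ℝ, ContinuousOn v (Set.Icc b (b + 1)) ∧
      MeasureTheory.IntegrableOn (fun t => g t ^ 2) (Set.Ioo b (b + 1)) ∧
      (∀ x ∈ Set.Icc b (b + 1), v x = v b + ∫ t in b..x, g t) ∧
      (∫ r in b..(b + 1), v r * r) = 0 ∧ v c ≠ 0 ∧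
      v c ^ 2 = Phi b c * ∫ r in b..(b + 1), (g r) ^ 2 * r := by
  have heval := extremal_eq_integral_extremalDeriv_sq_mul hb hc
  refine ⟨extremal b c, extremalDeriv b c, continuousOn_extremal hb, ?_,
    fun x hx => extremal_eq_add_integral hb hc hx, integral_extremal_mul_self hb,
    heval ▸ (integral_extremalDeriv_sq_mul_pos hb hc.1).ne', ?_⟩
  · exact (intervalIntegrable_comp_extremalDeriv hb hc.1 (φ := fun y _ => y ^ 2)
      (by fun_prop)).def'.mono_set (uIoc_of_le (by linarith : b ≤ b + 1) ▸ Ioo_subset_Ioc_self)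
  · rw [heval, integral_extremalDeriv_sq_mul hb hc]
    ring
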